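/- If X is a maximal operator space and Y a closed subspace of X, then the quotient operator space X/Y is maximal: Max(X/Y) is completely isometric to Max(X)/Y. -/

import Mathlib

noncomputable section

namespace OSP

/-- A sequence of matrix norms (as bare functions) on a type `X`. -/
abbrev MatNorms (X : Type) : Type := ∀ n : ℕ, Matrix (Fin n) (Fin n) X → ℝ

/-- The operator norm of a scalar matrix, viewed as an operator on Euclidean space. -/
def scNorm {m : Type} [Fintype m] [DecidableEq m] (A : Matrix m m ℂ) : ℝ :=
  ‖Matrix.toEuclideanCLM (𝕜 := ℂ) (n := m) A‖

/-- The two-sided scalar multiplication `a · x · b` of a matrix over `X` by scalar matrices. -/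
def smulMat {X : Type} [AddCommGroup X] [Module ℂ X] {n : ℕ}
    (a : Matrix (Fin n) (Fin n) ℂ) (x : Matrix (Fin n) (Fin n) X)
    (b : Matrix (Fin n) (Fin n) ℂ) : Matrix (Fin n) (Fin n) X :=
  Matrix.of fun i j => ∑ k, ∑ l, (a i k * b l j) • x k l

/-- An (admissible, abstract) operator space structure on a normed space `X`:
a sequence of matrix norms satisfying Ruan's axioms whose first level is the norm of `X`. -/
structure OSS (X : Type) [NormedAddCommGroup X] [NormedSpace ℂ X] where
  N : MatNorms X
  nonneg : ∀ n x, 0 ≤ N n x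
  add_le : ∀ n (x y : Matrix (Fin n) (Fin n) X), N n (x + y) ≤ N n x + N n y
  smul_eq : ∀ n (c : ℂ) (x : Matrix (Fin n) (Fin n) X), N n (c • x) = ‖c‖ * N n x
  eq_zero : ∀ n (x : Matrix (Fin n) (Fin n) X), N n x = 0 → x = 0
  level_one : ∀ x : X, N 1 (Matrix.of fun _ _ => x) = ‖x‖
  ruan_mul : ∀ n (a b : Matrix (Fin n) (Fin n) ℂ) (x : Matrix (Fin n) (Fin n) X),
    N n (smulMat a x b) ≤ scNorm a * N n x * scNorm b
  ruan_block : ∀ (n m : ℕ) (x : Matrix (Fin n) (Fin n) X) (y : Matrix (Fin m) (Fin m) X),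
    N (n + m) ((Matrix.fromBlocks x 0 0 y).submatrix finSumFinEquiv.symm finSumFinEquiv.symm)
      = max (N n x) (N m y)

/-- A bundled operator space. -/
structure OpSpace where
  carrier : Type
  [grp : NormedAddCommGroup carrier]
  [mod : NormedSpace ℂ carrier]
  str : OSS carrier

attribute [instance] OpSpace.grp OpSpace.mod

/-- `f` amplifies with bound `C` at all matrix levels. -/
def ampBound {X Y : Type} (NX : MatNorms X) (NY : MatNorms Y) (f : X → Y) (C : ℝ) : Prop :=
  ∀ n (x : Matrix (Fin n) (Fin n) X), NY n (x.map f) ≤ C * NX n x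

/-- `f` is completely bounded. -/
def CompletelyBounded {X Y : Type} (NX : MatNorms X) (NY : MatNorms Y) (f : X → Y) : Prop :=
  ∃ C, 0 ≤ C ∧ ampBound NX NY f C

/-- The completely bounded norm of `f`. -/
def cbNorm {X Y : Type} (NX : MatNorms X) (NY : MatNorms Y) (f : X → Y) : ℝ :=
  sInf {C | 0 ≤ C ∧ ampBound NX NY f C}

/-- The matrix norms of the minimal operator space structure `Min X`. -/
def minN (X : Type) [NormedAddCommGroup X] [NormedSpace ℂ X] : MatNorms X :=
  fun n x => sSup {r | ∃ f : X →L[ℂ] ℂ, ‖f‖ ≤ 1 ∧ r = scNorm (x.map ⇑f)}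

/-- The matrix norms of the maximal operator space structure `Max X`. -/
def maxN (X : Type) [NormedAddCommGroup X] [NormedSpace ℂ X] : MatNorms X :=
  fun n x => sSup {r | ∃ (Z : OpSpace) (u : X →L[ℂ] Z.carrier), ‖u‖ ≤ 1 ∧ r = Z.str.N n (x.map ⇑u)}

/-- The inherited (subspace) matrix norms on a submodule. -/
def subN {X : Type} [NormedAddCommGroup X] [NormedSpace ℂ X]
    (NX : MatNorms X) (Y : Submodule ℂ X) : MatNorms Y :=
  fun n x => NX n (x.map ⇑Y.subtype)

/-- The quotient matrix norms on `X ⧸ Y`. -/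
def quotN {X : Type} [NormedAddCommGroup X] [NormedSpace ℂ X]
    (NX : MatNorms X) (Y : Submodule ℂ X) : MatNorms (X ⧸ Y) :=
  fun n z => sInf {r | ∃ x : Matrix (Fin n) (Fin n) X, x.map ⇑Y.mkQ = z ∧ r = NX n x}

/-- The canonical operator space matrix norms on `M_d(ℂ)`. -/
def MnN (d : ℕ) : MatNorms (Matrix (Fin d) (Fin d) ℂ) :=
  fun n x => scNorm (Matrix.of fun p q : Fin n × Fin d => x p.1 q.1 p.2 q.2)

/-- The dual matrix norms on `X* = X →L[ℂ] ℂ`, via `M_n(X*) = CB(X, M_n)`. -/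
def dualN {X : Type} [NormedAddCommGroup X] [NormedSpace ℂ X] (NX : MatNorms X) :
    MatNorms (X →L[ℂ] ℂ) :=
  fun n F => cbNorm NX (MnN n) (fun x => Matrix.of fun i j => F i j x)

/-- The annihilator `Y⊥` of a subspace `Y ⊆ X` inside the dual `X*`. -/
def ann {X : Type} [NormedAddCommGroup X] [NormedSpace ℂ X] (Y : Submodule ℂ X) :
    Submodule ℂ (X →L[ℂ] ℂ) where
  carrier := {f | ∀ y ∈ Y, f y = 0}
  add_mem' := by intro f g hf hg y hy; simp [hf y hy, hg y hy]
  zero_mem' := by intro y hy; simp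
  smul_mem' := by intro c f hf y hy; simp [hf y hy]

/-- A complete quotient map: every amplification maps the open unit ball onto the open unit ball. -/
def CompleteQuotientMap {X Z : Type} (NX : MatNorms X) (NZ : MatNorms Z) (f : X → Z) : Prop :=
  ∀ n, (fun x : Matrix (Fin n) (Fin n) X => x.map f) '' {x | NX n x < 1} = {z | NZ n z < 1}

end OSP

/-!
Both inequalities come from the universal property of `Max`: `‖z‖_{Max E}` is the supremum of
`‖[u(zᵢⱼ)]‖` over all contractions `u` from `E` into operator spaces. A contraction
`u : X/Y → Z` composed with the quotient map is a contraction on `X`, so `‖[u(zᵢⱼ)]‖ ≤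
‖x‖_{Max X}` for every lift `x` of `z`, whence `‖z‖_{Max(X/Y)} ≤ ‖z‖_{Max(X)/Y}`. Conversely,
the quotient matrix norms of any operator space satisfy Ruan's axioms again, so `Max(X)/Y` is an
operator space structure on `X/Y`; the identity of `X/Y` into it is a contraction, which gives
the other inequality.
-/

namespace OSP
open Matrix

def dsum {α : Type} [Zero α] {n m : ℕ} (x : Matrix (Fin n) (Fin n) α)
    (y : Matrix (Fin m) (Fin m) α) : Matrix (Fin (n + m)) (Fin (n + m)) α :=
  (fromBlocks x 0 0 y).submatrix finSumFinEquiv.symm finSumFinEquiv.symm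

section BlockMatrices

variable {n m : ℕ}

lemma ext_finSumFinEquiv {α : Type} {A B : Matrix (Fin (n + m)) (Fin (n + m)) α}
    (h : ∀ s t,
      A (finSumFinEquiv s) (finSumFinEquiv t) = B (finSumFinEquiv s) (finSumFinEquiv t)) :
    A = B := by
  ext p q
  simpa using h (finSumFinEquiv.symm p) (finSumFinEquiv.symm q)

variable {α : Type} [Zero α]

lemma dsum_apply_finSumFinEquiv (x : Matrix (Fin n) (Fin n) α) (y : Matrix (Fin m) (Fin m) α)
    (s t : Fin n ⊕ Fin m) :
    dsum x y (finSumFinEquiv s) (finSumFinEquiv t) = fromBlocks x 0 0 y s t := by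
  simp [dsum]

lemma dsum_submatrix_inl (x : Matrix (Fin n) (Fin n) α) (y : Matrix (Fin m) (Fin m) α) :
    (dsum x y).submatrix (finSumFinEquiv ∘ Sum.inl) (finSumFinEquiv ∘ Sum.inl) = x := by
  ext i j
  simp [dsum]

lemma dsum_submatrix_inr (x : Matrix (Fin n) (Fin n) α) (y : Matrix (Fin m) (Fin m) α) :
    (dsum x y).submatrix (finSumFinEquiv ∘ Sum.inr) (finSumFinEquiv ∘ Sum.inr) = y := by
  ext i j
  simp [dsum]

lemma map_dsum {β : Type} [Zero β] (f : α → β) (hf : f 0 = 0)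
    (x : Matrix (Fin n) (Fin n) α) (y : Matrix (Fin m) (Fin m) α) :
    (dsum x y).map f = dsum (x.map f) (y.map f) := by
  refine ext_finSumFinEquiv fun s t => ?_
  simp only [map_apply, dsum_apply_finSumFinEquiv]
  rcases s with i | i <;> rcases t with j | j <;> simp [hf]

lemma dsum_of_fin_one_zero (v : α) :
    dsum (of fun _ _ : Fin 1 => v) (0 : Matrix (Fin m) (Fin m) α)
      = single (finSumFinEquiv (Sum.inl 0)) (finSumFinEquiv (Sum.inl 0)) v := by
  refine ext_finSumFinEquiv fun s t => ?_
  simp only [dsum_apply_finSumFinEquiv, single_apply, EmbeddingLike.apply_eq_iff_eq]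
  rcases s with i | i <;> rcases t with j | j <;> simp [Fin.fin_one_eq_zero]

lemma dsum_diagonal (d₁ : Fin n → ℂ) (d₂ : Fin m → ℂ) :
    dsum (diagonal d₁) (diagonal d₂) = diagonal (Sum.elim d₁ d₂ ∘ finSumFinEquiv.symm) := by
  rw [dsum, fromBlocks_diagonal, submatrix_diagonal_equiv]

end BlockMatrices

section SMulMat

variable {M : Type} [AddCommGroup M] [Module ℂ M] {n m : ℕ}

lemma map_smulMat {N F : Type} [AddCommGroup N] [Module ℂ N] [FunLike F M N]
    [LinearMapClass F ℂ M N] (f : F) (a b : Matrix (Fin n) (Fin n) ℂ)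
    (x : Matrix (Fin n) (Fin n) M) :
    (smulMat a x b).map f = smulMat a (x.map f) b := by
  ext p q
  simp [smulMat, map_sum]

lemma smulMat_eq_mul (a x b : Matrix (Fin n) (Fin n) ℂ) : smulMat a x b = a * x * b := by
  ext p q
  simp only [smulMat, of_apply, mul_apply, smul_eq_mul, Finset.sum_mul]
  rw [Finset.sum_comm]
  exact Finset.sum_congr rfl fun _ _ => Finset.sum_congr rfl fun _ _ => by ring

lemma smulMat_single_single (p q i j : Fin n) (x : Matrix (Fin n) (Fin n) M) :
    smulMat (single p i 1) x (single j q 1) = single p q (x i j) := by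
  ext r s
  by_cases hp : p = r <;> by_cases hq : q = s <;>
    simp [smulMat, single_apply, ite_and, hp, hq]

lemma smulMat_diagonal (d : Fin n → ℂ) (W : Matrix (Fin n) (Fin n) M) :
    smulMat (diagonal d) W (diagonal d) = of fun i j => (d i * d j) • W i j := by
  ext i j
  simp [smulMat, diagonal_apply, ite_mul, mul_ite, ite_smul, Finset.sum_ite_eq]

lemma smulMat_dsum_one_zero (W : Matrix (Fin (n + m)) (Fin (n + m)) M) :
    smulMat (dsum 1 0) W (dsum 1 0)
      = dsum (W.submatrix (finSumFinEquiv ∘ Sum.inl) (finSumFinEquiv ∘ Sum.inl)) 0 := by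
  rw [← diagonal_one, ← diagonal_zero, dsum_diagonal, smulMat_diagonal]
  refine ext_finSumFinEquiv fun s t => ?_
  simp only [of_apply, dsum_apply_finSumFinEquiv, Function.comp_apply, Equiv.symm_apply_apply]
  rcases s with i | i <;> rcases t with j | j <;> simp

lemma smulMat_dsum_zero_one (W : Matrix (Fin (n + m)) (Fin (n + m)) M) :
    smulMat (dsum 0 1) W (dsum 0 1)
      = dsum 0 (W.submatrix (finSumFinEquiv ∘ Sum.inr) (finSumFinEquiv ∘ Sum.inr)) := by
  rw [← diagonal_one, ← diagonal_zero, dsum_diagonal, smulMat_diagonal]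
  refine ext_finSumFinEquiv fun s t => ?_
  simp only [of_apply, dsum_apply_finSumFinEquiv, Function.comp_apply, Equiv.symm_apply_apply]
  rcases s with i | i <;> rcases t with j | j <;> simp

end SMulMat

section ScalarMatrices

open scoped Matrix.Norms.L2Operator

variable {k : Type} [Fintype k] [DecidableEq k]

lemma scNorm_eq_norm (A : Matrix k k ℂ) : scNorm A = ‖A‖ := rfl

lemma scNorm_nonneg (A : Matrix k k ℂ) : 0 ≤ scNorm A := norm_nonneg A

lemma scNorm_zero : scNorm (0 : Matrix k k ℂ) = 0 := by
  rw [scNorm_eq_norm, norm_zero]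

lemma scNorm_one_le : scNorm (1 : Matrix k k ℂ) ≤ 1 := by
  rw [scNorm, map_one, ContinuousLinearMap.one_def]
  exact ContinuousLinearMap.norm_id_le

lemma scNorm_single (i j : k) (c : ℂ) : scNorm (single i j c) = ‖c‖ := by
  rw [scNorm_eq_norm]
  have h : ‖single i j c‖ * ‖single i j c‖ = ‖c‖ * ‖c‖ := by
    rw [← l2_opNorm_conjTranspose_mul_self, conjTranspose_single, single_mul_single_same,
      ← diagonal_single, l2_opNorm_diagonal, Pi.norm_single, norm_mul, norm_star]
  nlinarith [norm_nonneg (single i j c), norm_nonneg c]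

lemma scNorm_single_one_le (i j : k) : scNorm (single i j (1 : ℂ)) ≤ 1 := by
  rw [scNorm_single, norm_one]

def dsumStarAlgHom (n m : ℕ) :
    (Matrix (Fin n) (Fin n) ℂ × Matrix (Fin m) (Fin m) ℂ) →⋆ₐ[ℂ]
      Matrix (Fin (n + m)) (Fin (n + m)) ℂ where
  toFun p := dsum p.1 p.2
  map_one' := by simp [dsum, fromBlocks_one]
  map_mul' p q := by simp [dsum, submatrix_mul_equiv, fromBlocks_multiply]
  map_zero' := by simp [dsum]
  map_add' p q := ext_finSumFinEquiv fun s t => by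
    simp only [Matrix.add_apply, dsum_apply_finSumFinEquiv]
    rcases s with i | i <;> rcases t with j | j <;> simp
  commutes' c := ext_finSumFinEquiv fun s t => by
    simp only [Algebra.algebraMap_eq_smul_one, Prod.smul_fst, Prod.smul_snd, Prod.fst_one,
      Prod.snd_one, dsum_apply_finSumFinEquiv, Matrix.smul_apply, one_apply,
      EmbeddingLike.apply_eq_iff_eq]
    rcases s with i | i <;> rcases t with j | j <;> simp [one_apply]
  map_star' p := by simp [dsum, star_eq_conjTranspose, fromBlocks_conjTranspose]

/-- An injective star homomorphism between C⋆-algebras is isometric, and the norm of the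
C⋆-algebra `M_n × M_m` is the maximum of the norms of the components. -/
lemma scNorm_dsum {n m : ℕ} (A : Matrix (Fin n) (Fin n) ℂ) (B : Matrix (Fin m) (Fin m) ℂ) :
    scNorm (dsum A B) = max (scNorm A) (scNorm B) := by
  refine NonUnitalStarAlgHom.norm_map (dsumStarAlgHom n m) (fun p q h => ?_) (A, B)
  change dsum p.1 p.2 = dsum q.1 q.2 at h
  have h₁ := dsum_submatrix_inl p.1 p.2
  have h₂ := dsum_submatrix_inr p.1 p.2
  rw [h, dsum_submatrix_inl] at h₁
  rw [h, dsum_submatrix_inr] at h₂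
  exact Prod.ext h₁.symm h₂.symm

def complexOSS : OSS ℂ where
  N _ x := scNorm x
  nonneg _ x := norm_nonneg x
  add_le _ x y := norm_add_le x y
  smul_eq _ c x := norm_smul c x
  eq_zero _ x := (norm_eq_zero (a := x)).mp
  level_one x := by
    have : (of fun _ _ => x : Matrix (Fin 1) (Fin 1) ℂ) = single 0 0 x := by
      ext i j; fin_cases i; fin_cases j; rfl
    rw [this, scNorm_single]
  ruan_mul n a b x := by
    rw [smulMat_eq_mul]
    exact (norm_mul_le _ _).trans (mul_le_mul_of_nonneg_right (norm_mul_le a x) (norm_nonneg b))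
  ruan_block _ _ x y := scNorm_dsum x y

end ScalarMatrices

abbrev complexOpSpace : OpSpace := ⟨ℂ, complexOSS⟩

lemma map_smul_of_smul_le {E : Type} [AddCommGroup E] [Module ℂ E] {f : E → ℝ} (h0 : f 0 = 0)
    (hadd : ∀ x y, f (x + y) ≤ f x + f y) (hsmul : ∀ (c : ℂ) x, f (c • x) ≤ ‖c‖ * f x)
    (c : ℂ) (x : E) : f (c • x) = ‖c‖ * f x :=
  map_smul_eq_mul (Seminorm.ofSMulLE f h0 hadd hsmul) c x

namespace OSS

variable {X : Type} [NormedAddCommGroup X] [NormedSpace ℂ X] (S : OSS X) {n m : ℕ}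

lemma N_dsum (x : Matrix (Fin n) (Fin n) X) (y : Matrix (Fin m) (Fin m) X) :
    S.N (n + m) (dsum x y) = max (S.N n x) (S.N m y) :=
  S.ruan_block n m x y

lemma N_zero (n : ℕ) : S.N n 0 = 0 := by
  simpa using S.smul_eq n 0 0

lemma N_smulMat_le {a b : Matrix (Fin n) (Fin n) ℂ} (ha : scNorm a ≤ 1) (hb : scNorm b ≤ 1)
    (x : Matrix (Fin n) (Fin n) X) : S.N n (smulMat a x b) ≤ S.N n x :=
  calc S.N n (smulMat a x b) ≤ scNorm a * S.N n x * scNorm b := S.ruan_mul n a b x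
    _ ≤ 1 * S.N n x * 1 := by
      have := S.nonneg n x
      gcongr
      exact scNorm_nonneg b
    _ = S.N n x := by ring

lemma N_single_inl_zero (v : X) :
    S.N (1 + m) (single (finSumFinEquiv (Sum.inl 0)) (finSumFinEquiv (Sum.inl 0)) v) = ‖v‖ := by
  rw [← dsum_of_fin_one_zero, N_dsum, level_one, N_zero, max_eq_left (norm_nonneg v)]

/-- Contractive scalar matrices move the entry at `(i, j)` to the corner `(0, 0)` and back. -/
lemma N_single_le (i j : Fin n) (v : X) : S.N n (single i j v) ≤ ‖v‖ := by
  obtain ⟨m, rfl⟩ : ∃ m, n = 1 + m := ⟨n - 1, by have := i.pos; omega⟩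
  set o : Fin (1 + m) := finSumFinEquiv (Sum.inl 0)
  calc S.N (1 + m) (single i j v)
      = S.N (1 + m) (smulMat (single i o 1) (single o o v) (single o j 1)) := by
        rw [smulMat_single_single, single_apply_same]
    _ ≤ S.N (1 + m) (single o o v) :=
        S.N_smulMat_le (scNorm_single_one_le i o) (scNorm_single_one_le o j) _
    _ = ‖v‖ := S.N_single_inl_zero v

lemma norm_apply_le (x : Matrix (Fin n) (Fin n) X) (i j : Fin n) : ‖x i j‖ ≤ S.N n x := by
  obtain ⟨m, rfl⟩ : ∃ m, n = 1 + m := ⟨n - 1, by have := i.pos; omega⟩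
  set o : Fin (1 + m) := finSumFinEquiv (Sum.inl 0)
  calc ‖x i j‖ = S.N (1 + m) (single o o (x i j)) := (S.N_single_inl_zero _).symm
    _ = S.N (1 + m) (smulMat (single o i 1) x (single j o 1)) := by rw [smulMat_single_single]
    _ ≤ S.N (1 + m) x := S.N_smulMat_le (scNorm_single_one_le o i) (scNorm_single_one_le j o) x

lemma N_le_sum_norm (x : Matrix (Fin n) (Fin n) X) : S.N n x ≤ ∑ i, ∑ j, ‖x i j‖ := by
  conv_lhs => rw [matrix_eq_sum_single x]
  refine (Finset.le_sum_of_subadditive (S.N n) (S.N_zero n).le (S.add_le n) _ _).trans ?_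
  refine Finset.sum_le_sum fun i _ => ?_
  refine (Finset.le_sum_of_subadditive (S.N n) (S.N_zero n).le (S.add_le n) _ _).trans ?_
  exact Finset.sum_le_sum fun j _ => S.N_single_le i j _

lemma N_submatrix_inl_le (W : Matrix (Fin (n + m)) (Fin (n + m)) X) :
    S.N n (W.submatrix (finSumFinEquiv ∘ Sum.inl) (finSumFinEquiv ∘ Sum.inl))
      ≤ S.N (n + m) W := by
  have hP : scNorm (dsum (1 : Matrix (Fin n) (Fin n) ℂ) (0 : Matrix (Fin m) (Fin m) ℂ)) ≤ 1 := by
    rw [scNorm_dsum, scNorm_zero]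
    exact max_le scNorm_one_le zero_le_one
  calc _ ≤ S.N (n + m)
        (dsum (W.submatrix (finSumFinEquiv ∘ Sum.inl) (finSumFinEquiv ∘ Sum.inl)) 0) := by
        rw [N_dsum]; exact le_max_left _ _
    _ = S.N (n + m) (smulMat (dsum 1 0) W (dsum 1 0)) := by rw [smulMat_dsum_one_zero]
    _ ≤ S.N (n + m) W := S.N_smulMat_le hP hP W

lemma N_submatrix_inr_le (W : Matrix (Fin (n + m)) (Fin (n + m)) X) :
    S.N m (W.submatrix (finSumFinEquiv ∘ Sum.inr) (finSumFinEquiv ∘ Sum.inr))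
      ≤ S.N (n + m) W := by
  have hP : scNorm (dsum (0 : Matrix (Fin n) (Fin n) ℂ) (1 : Matrix (Fin m) (Fin m) ℂ)) ≤ 1 := by
    rw [scNorm_dsum, scNorm_zero]
    exact max_le zero_le_one scNorm_one_le
  calc _ ≤ S.N (n + m)
        (dsum 0 (W.submatrix (finSumFinEquiv ∘ Sum.inr) (finSumFinEquiv ∘ Sum.inr))) := by
        rw [N_dsum]; exact le_max_right _ _
    _ = S.N (n + m) (smulMat (dsum 0 1) W (dsum 0 1)) := by rw [smulMat_dsum_zero_one]
    _ ≤ S.N (n + m) W := S.N_smulMat_le hP hP W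

end OSS

section Quotient

variable {X : Type} [NormedAddCommGroup X] [NormedSpace ℂ X] (S : OSS X) (Y : Submodule ℂ X)
  {n m : ℕ}

lemma norm_mkQL_le : ‖Y.mkQL‖ ≤ 1 :=
  Y.mkQL.opNorm_le_bound zero_le_one fun x => by
    simpa using Submodule.Quotient.norm_mk_le Y x

lemma exists_map_mkQ_eq (z : Matrix (Fin n) (Fin n) (X ⧸ Y)) :
    ∃ x : Matrix (Fin n) (Fin n) X, x.map Y.mkQ = z := by
  choose x hx using fun i j => Y.mkQ_surjective (z i j)
  exact ⟨of x, ext hx⟩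

lemma quotN_le {z : Matrix (Fin n) (Fin n) (X ⧸ Y)} {x : Matrix (Fin n) (Fin n) X}
    (hx : x.map Y.mkQ = z) : quotN S.N Y n z ≤ S.N n x :=
  csInf_le ⟨0, by rintro _ ⟨x', -, rfl⟩; exact S.nonneg n x'⟩ ⟨x, hx, rfl⟩

lemma le_quotN {z : Matrix (Fin n) (Fin n) (X ⧸ Y)} {C : ℝ}
    (h : ∀ x : Matrix (Fin n) (Fin n) X, x.map Y.mkQ = z → C ≤ S.N n x) :
    C ≤ quotN S.N Y n z := by
  obtain ⟨x, hx⟩ := exists_map_mkQ_eq Y z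
  exact le_csInf ⟨_, x, hx, rfl⟩ fun _ ⟨x', hx', hr⟩ => hr ▸ h x' hx'

lemma exists_map_mkQ_eq_N_lt (z : Matrix (Fin n) (Fin n) (X ⧸ Y)) {ε : ℝ} (hε : 0 < ε) :
    ∃ x : Matrix (Fin n) (Fin n) X, x.map Y.mkQ = z ∧ S.N n x < quotN S.N Y n z + ε := by
  obtain ⟨x, hx⟩ := exists_map_mkQ_eq Y z
  obtain ⟨_, ⟨x', hx', rfl⟩, hlt⟩ := Real.lt_sInf_add_pos
    (s := {r | ∃ x : Matrix (Fin n) (Fin n) X, x.map Y.mkQ = z ∧ r = S.N n x})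
    ⟨_, x, hx, rfl⟩ hε
  exact ⟨x', hx', hlt⟩

lemma quotN_le_mul_of_map_mkQ {f : Matrix (Fin n) (Fin n) X → Matrix (Fin n) (Fin n) X}
    {g : Matrix (Fin n) (Fin n) (X ⧸ Y) → Matrix (Fin n) (Fin n) (X ⧸ Y)} {K : ℝ} (hK : 0 ≤ K)
    (hfg : ∀ x, (f x).map Y.mkQ = g (x.map Y.mkQ)) (hf : ∀ x, S.N n (f x) ≤ K * S.N n x)
    (z : Matrix (Fin n) (Fin n) (X ⧸ Y)) : quotN S.N Y n (g z) ≤ K * quotN S.N Y n z := by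
  have hlift : ∀ x, x.map Y.mkQ = z → quotN S.N Y n (g z) ≤ K * S.N n x := fun x hx =>
    (quotN_le S Y (hx ▸ hfg x)).trans (hf x)
  rcases hK.eq_or_lt with rfl | hK
  · obtain ⟨x, hx⟩ := exists_map_mkQ_eq Y z
    simpa using hlift x hx
  · rw [← div_le_iff₀' hK]
    exact le_quotN S Y fun x hx => (div_le_iff₀' hK).mpr (hlift x hx)

lemma quotN_nonneg (z : Matrix (Fin n) (Fin n) (X ⧸ Y)) : 0 ≤ quotN S.N Y n z :=
  le_quotN S Y fun x _ => S.nonneg n x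

lemma quotN_zero : quotN S.N Y n 0 = 0 :=
  le_antisymm ((quotN_le S Y (Matrix.map_zero _ Y.mkQ.map_zero)).trans (S.N_zero n).le)
    (quotN_nonneg S Y 0)

lemma quotN_add_le (z w : Matrix (Fin n) (Fin n) (X ⧸ Y)) :
    quotN S.N Y n (z + w) ≤ quotN S.N Y n z + quotN S.N Y n w := by
  refine le_of_forall_pos_le_add fun ε hε => ?_
  obtain ⟨x, rfl, hx⟩ := exists_map_mkQ_eq_N_lt S Y z (half_pos hε)
  obtain ⟨y, rfl, hy⟩ := exists_map_mkQ_eq_N_lt S Y w (half_pos hε)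
  calc quotN S.N Y n (x.map Y.mkQ + y.map Y.mkQ) ≤ S.N n (x + y) :=
        quotN_le S Y (Matrix.map_add _ (map_add Y.mkQ) x y)
    _ ≤ S.N n x + S.N n y := S.add_le n x y
    _ ≤ _ := by linarith

lemma quotN_smul (c : ℂ) (z : Matrix (Fin n) (Fin n) (X ⧸ Y)) :
    quotN S.N Y n (c • z) = ‖c‖ * quotN S.N Y n z :=
  map_smul_of_smul_le (quotN_zero S Y) (quotN_add_le S Y) (fun c =>
    quotN_le_mul_of_map_mkQ S Y (f := (c • ·)) (g := (c • ·)) (norm_nonneg c)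
      (Matrix.map_smul _ c (map_smul Y.mkQ c)) (fun x => (S.smul_eq n c x).le)) c z

lemma quotN_smulMat_le (a b : Matrix (Fin n) (Fin n) ℂ) (z : Matrix (Fin n) (Fin n) (X ⧸ Y)) :
    quotN S.N Y n (smulMat a z b) ≤ scNorm a * quotN S.N Y n z * scNorm b := by
  rw [mul_right_comm]
  exact quotN_le_mul_of_map_mkQ S Y (f := (smulMat a · b)) (g := (smulMat a · b))
    (mul_nonneg (scNorm_nonneg a) (scNorm_nonneg b)) (map_smulMat Y.mkQ a b)
    (fun x => (S.ruan_mul n a b x).trans_eq (by ring)) z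

lemma norm_apply_le_quotN (z : Matrix (Fin n) (Fin n) (X ⧸ Y)) (i j : Fin n) :
    ‖z i j‖ ≤ quotN S.N Y n z :=
  le_quotN S Y fun x hx => by
    rw [← hx]
    exact (Submodule.Quotient.norm_mk_le Y (x i j)).trans (S.norm_apply_le x i j)

lemma quotN_level_one (z : X ⧸ Y) : quotN S.N Y 1 (of fun _ _ => z) = ‖z‖ := by
  refine le_antisymm (le_of_forall_pos_le_add fun ε hε => ?_)
    (norm_apply_le_quotN S Y (of fun _ _ => z) 0 0)
  obtain ⟨x, rfl, hx⟩ := Submodule.Quotient.norm_mk_lt z hε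
  calc quotN S.N Y 1 (of fun _ _ => Submodule.Quotient.mk x) ≤ S.N 1 (of fun _ _ => x) :=
        quotN_le S Y (by ext; rfl)
    _ = ‖x‖ := S.level_one x
    _ ≤ _ := hx.le

lemma quotN_dsum (z : Matrix (Fin n) (Fin n) (X ⧸ Y)) (w : Matrix (Fin m) (Fin m) (X ⧸ Y)) :
    quotN S.N Y (n + m) (dsum z w) = max (quotN S.N Y n z) (quotN S.N Y m w) := by
  refine le_antisymm (le_of_forall_pos_le_add fun ε hε => ?_) (max_le ?_ ?_)
  · obtain ⟨x, rfl, hx⟩ := exists_map_mkQ_eq_N_lt S Y z hε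
    obtain ⟨y, rfl, hy⟩ := exists_map_mkQ_eq_N_lt S Y w hε
    calc quotN S.N Y (n + m) (dsum (x.map Y.mkQ) (y.map Y.mkQ)) ≤ S.N (n + m) (dsum x y) :=
          quotN_le S Y (map_dsum _ Y.mkQ.map_zero x y)
      _ = max (S.N n x) (S.N m y) := S.N_dsum x y
      _ ≤ max (quotN S.N Y n (x.map Y.mkQ) + ε) (quotN S.N Y m (y.map Y.mkQ) + ε) :=
          max_le_max hx.le hy.le
      _ = _ := max_add_add_right _ _ _
  · refine le_quotN S Y fun W hW => (quotN_le S Y ?_).trans (S.N_submatrix_inl_le W)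
    rw [← submatrix_map, hW, dsum_submatrix_inl]
  · refine le_quotN S Y fun W hW => (quotN_le S Y ?_).trans (S.N_submatrix_inr_le W)
    rw [← submatrix_map, hW, dsum_submatrix_inr]

def OSS.quotient [IsClosed (Y : Set X)] : OSS (X ⧸ Y) where
  N := quotN S.N Y
  nonneg _ := quotN_nonneg S Y
  add_le _ := quotN_add_le S Y
  smul_eq _ := quotN_smul S Y
  eq_zero _ z hz := ext fun i j =>
    norm_eq_zero.mp (le_antisymm (hz ▸ norm_apply_le_quotN S Y z i j) (norm_nonneg _))
  level_one := quotN_level_one S Y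
  ruan_mul _ := quotN_smulMat_le S Y
  ruan_block _ _ := quotN_dsum S Y

end Quotient

section Max

variable {X : Type} [NormedAddCommGroup X] [NormedSpace ℂ X] {n m : ℕ}

lemma le_maxN (Z : OpSpace) {u : X →L[ℂ] Z.carrier} (hu : ‖u‖ ≤ 1)
    (x : Matrix (Fin n) (Fin n) X) : Z.str.N n (x.map u) ≤ maxN X n x := by
  refine le_csSup ⟨∑ i, ∑ j, ‖x i j‖, ?_⟩ ⟨Z, u, hu, rfl⟩
  rintro _ ⟨Z', u', hu', rfl⟩
  refine (Z'.str.N_le_sum_norm _).trans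
    (Finset.sum_le_sum fun i _ => Finset.sum_le_sum fun j _ => ?_)
  simpa using u'.le_of_opNorm_le hu' (x i j)

lemma maxN_le {x : Matrix (Fin n) (Fin n) X} {C : ℝ}
    (h : ∀ (Z : OpSpace) (u : X →L[ℂ] Z.carrier), ‖u‖ ≤ 1 → Z.str.N n (x.map u) ≤ C) :
    maxN X n x ≤ C :=
  csSup_le ⟨_, complexOpSpace, 0, by simp, rfl⟩ fun _ ⟨Z, u, hu, hr⟩ => hr ▸ h Z u hu

lemma maxN_map_le {X' : Type} [NormedAddCommGroup X'] [NormedSpace ℂ X'] {v : X →L[ℂ] X'}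
    (hv : ‖v‖ ≤ 1) (x : Matrix (Fin n) (Fin n) X) : maxN X' n (x.map v) ≤ maxN X n x := by
  refine maxN_le fun Z u hu => ?_
  rw [map_map]
  exact le_maxN Z ((u.opNorm_comp_le v).trans (mul_le_one₀ hu (norm_nonneg v) hv)) x

lemma norm_apply_le_maxN (x : Matrix (Fin n) (Fin n) X) (i j : Fin n) :
    ‖x i j‖ ≤ maxN X n x := by
  obtain ⟨g, hg, hgx⟩ := exists_dual_vector'' ℂ (x i j)
  calc ‖x i j‖ = ‖(x.map g) i j‖ := by simp [hgx]
    _ ≤ complexOSS.N n (x.map g) := complexOSS.norm_apply_le _ i j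
    _ ≤ maxN X n x := le_maxN complexOpSpace hg x

lemma maxN_nonneg (x : Matrix (Fin n) (Fin n) X) : 0 ≤ maxN X n x :=
  (complexOSS.nonneg n _).trans (le_maxN complexOpSpace (u := 0) (by simp) x)

lemma maxN_zero : maxN X n 0 = 0 :=
  le_antisymm (maxN_le fun Z u _ => by rw [Matrix.map_zero _ u.map_zero, Z.str.N_zero])
    (maxN_nonneg 0)

lemma maxN_add_le (x y : Matrix (Fin n) (Fin n) X) :
    maxN X n (x + y) ≤ maxN X n x + maxN X n y :=
  maxN_le fun Z u hu => by
    rw [Matrix.map_add _ (map_add u)]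
    exact (Z.str.add_le n _ _).trans (add_le_add (le_maxN Z hu x) (le_maxN Z hu y))

lemma maxN_smul (c : ℂ) (x : Matrix (Fin n) (Fin n) X) :
    maxN X n (c • x) = ‖c‖ * maxN X n x :=
  map_smul_of_smul_le maxN_zero maxN_add_le (fun c x => maxN_le fun Z u hu => by
    rw [Matrix.map_smul _ c (map_smul u c), Z.str.smul_eq]
    exact mul_le_mul_of_nonneg_left (le_maxN Z hu x) (norm_nonneg c)) c x

lemma maxN_smulMat_le (a b : Matrix (Fin n) (Fin n) ℂ) (x : Matrix (Fin n) (Fin n) X) :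
    maxN X n (smulMat a x b) ≤ scNorm a * maxN X n x * scNorm b :=
  maxN_le fun Z u hu => by
    rw [map_smulMat]
    exact (Z.str.ruan_mul n a b _).trans (mul_le_mul_of_nonneg_right
      (mul_le_mul_of_nonneg_left (le_maxN Z hu x) (scNorm_nonneg a)) (scNorm_nonneg b))

lemma maxN_dsum (x : Matrix (Fin n) (Fin n) X) (y : Matrix (Fin m) (Fin m) X) :
    maxN X (n + m) (dsum x y) = max (maxN X n x) (maxN X m y) := by
  refine le_antisymm (maxN_le fun Z u hu => ?_)
    (max_le (maxN_le fun Z u hu => ?_) (maxN_le fun Z u hu => ?_))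
  · rw [map_dsum _ u.map_zero, Z.str.N_dsum]
    exact max_le_max (le_maxN Z hu x) (le_maxN Z hu y)
  · calc Z.str.N n (x.map u) ≤ Z.str.N (n + m) ((dsum x y).map u) := by
          rw [map_dsum _ u.map_zero, Z.str.N_dsum]; exact le_max_left _ _
      _ ≤ _ := le_maxN Z hu _
  · calc Z.str.N m (y.map u) ≤ Z.str.N (n + m) ((dsum x y).map u) := by
          rw [map_dsum _ u.map_zero, Z.str.N_dsum]; exact le_max_right _ _
      _ ≤ _ := le_maxN Z hu _

lemma maxN_level_one (a : X) : maxN X 1 (of fun _ _ => a) = ‖a‖ := by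
  refine le_antisymm (maxN_le fun Z u hu => ?_) (norm_apply_le_maxN (of fun _ _ => a) 0 0)
  calc Z.str.N 1 ((of fun _ _ => a).map u) = ‖u a‖ := Z.str.level_one (u a)
    _ ≤ ‖a‖ := by simpa using u.le_of_opNorm_le hu a

def maxOSS (X : Type) [NormedAddCommGroup X] [NormedSpace ℂ X] : OSS X where
  N := maxN X
  nonneg _ := maxN_nonneg
  add_le _ := maxN_add_le
  smul_eq _ := maxN_smul
  eq_zero _ x hx := ext fun i j =>
    norm_eq_zero.mp (le_antisymm (hx ▸ norm_apply_le_maxN x i j) (norm_nonneg _))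
  level_one := maxN_level_one
  ruan_mul _ := maxN_smulMat_le
  ruan_block _ _ := maxN_dsum

end Max

end OSP

theorem stmt9_general (X : Type) [NormedAddCommGroup X] [NormedSpace ℂ X]
    (Y : Submodule ℂ X) [IsClosed (Y : Set X)] :
    ∀ (n : ℕ) (z : Matrix (Fin n) (Fin n) (X ⧸ Y)),
      OSP.maxN (X ⧸ Y) n z = OSP.quotN (OSP.maxN X) Y n z := by
  intro n z
  refine le_antisymm (OSP.le_quotN (OSP.maxOSS X) Y fun x hx => ?_) ?_
  · exact hx ▸ OSP.maxN_map_le (OSP.norm_mkQL_le Y) x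
  · exact OSP.le_maxN ⟨X ⧸ Y, (OSP.maxOSS X).quotient Y⟩
      (ContinuousLinearMap.norm_id_le (E := X ⧸ Y)) z

/-- if `X` is a maximal operator space and `Y ⊆ X` is closed, then
`Max(X/Y) = Max(X)/Y` completely isometrically. -/
theorem stmt9 (X : Type) [NormedAddCommGroup X] [NormedSpace ℂ X] [CompleteSpace X]
    (Y : Submodule ℂ X) [IsClosed (Y : Set X)] :
    ∀ (n : ℕ) (z : Matrix (Fin n) (Fin n) (X ⧸ Y)),
      OSP.maxN (X ⧸ Y) n z = OSP.quotN (OSP.maxN X) Y n z :=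
  stmt9_general X Y
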